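/- Let (A_j)_{j ∈ J} be a family of topological abelian groups, P = ∏_{j ∈ J} A_j with the Tychonov topology and canonical embeddings τ_j : A_j → P. Let H be a profinite abelian group, i.e., a compact Hausdorff totally disconnected topological abelian group, and let (ψ_j)_{j ∈ J} be a convergent family of continuous homomorphisms ψ_j : A_j → H. Then there exists a unique continuous group homomorphism ω : P → H such that ψ_j = ω ∘ τ_j for all j ∈ J. -/

import Mathlib

/-!
A profinite group is nonarchimedean: its open subgroups form a basis of neighbourhoods of `1`.
Hence a convergent family `ψ` lets the products `∏_{j ∈ s} ψ j (x j)` over finite `s` converge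
uniformly in `x`, so `ω x = ∏' j, ψ j (x j)` is a continuous homomorphism extending every `ψ j`.
Uniqueness holds because `x = ∏' j, Pi.mulSingle j (x j)` in the product topology, and a
continuous homomorphism commutes with unconditional products.
-/

open Filter Topology

theorem NonarchimedeanGroup.of_compactSpace_of_totallyDisconnectedSpace {G : Type*} [Group G]
    [TopologicalSpace G] [IsTopologicalGroup G] [CompactSpace G] [TotallyDisconnectedSpace G] :
    NonarchimedeanGroup G where
  is_nonarchimedean U hU := by
    obtain ⟨O, hOU, hO, h1O⟩ := mem_nhds_iff.mp hU
    obtain ⟨V, hV⟩ := ProfiniteGrp.exist_openNormalSubgroup_sub_open_nhds_of_one hO h1O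
    exact ⟨V.toOpenSubgroup, hV.trans hOU⟩

namespace NonarchimedeanGroup

variable {J X G : Type*} [CommGroup G] [UniformSpace G] [IsUniformGroup G] [NonarchimedeanGroup G]
  [CompleteSpace G] {f : J → X → G}

theorem multipliable_of_tendstoUniformly_cofinite_one (hf : TendstoUniformly f 1 cofinite)
    (x : X) : Multipliable fun j ↦ f j x :=
  multipliable_of_tendsto_cofinite_one (hf.tendsto_at x)

variable [T2Space G]

theorem tendstoUniformly_prod_of_tendstoUniformly_cofinite_one
    (hf : TendstoUniformly f 1 cofinite) :
    TendstoUniformly (fun (s : Finset J) x ↦ ∏ j ∈ s, f j x) (fun x ↦ ∏' j, f j x) atTop := by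
  rw [IsTopologicalGroup.tendstoUniformly_iff _ _ _ IsUniformGroup.rightUniformSpace_eq]
  intro U hU
  obtain ⟨V, hVU⟩ := is_nonarchimedean U hU
  have hsmall : ∀ᶠ j in cofinite, ∀ x, f j x ∈ V := by
    simpa using (IsTopologicalGroup.tendstoUniformly_iff _ _ _
      IsUniformGroup.rightUniformSpace_eq).mp hf V V.mem_nhds_one
  filter_upwards [eventually_ge_atTop (eventually_cofinite.mp hsmall).toFinset] with s hs x
  apply hVU
  have htail : ∏' j : ↑(s : Set J)ᶜ, f j x ∈ V :=
    tprod_mem V.isClosed fun j ↦ by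
      by_contra hj
      exact j.2 (hs (by simpa using ⟨x, hj⟩))
  rw [← (multipliable_of_tendstoUniformly_cofinite_one hf x).prod_mul_tprod_compl,
    div_mul_cancel_left]
  exact V.inv_mem htail

theorem continuous_tprod_of_tendstoUniformly_cofinite_one [TopologicalSpace X]
    (hcont : ∀ j, Continuous (f j)) (hf : TendstoUniformly f 1 cofinite) :
    Continuous fun x ↦ ∏' j, f j x :=
  (tendstoUniformly_prod_of_tendstoUniformly_cofinite_one hf).continuous
    (Frequently.of_forall fun s ↦ continuous_finsetProd s fun j _ ↦ hcont j)

end NonarchimedeanGroup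

section PiProduct

variable {J : Type*} [DecidableEq J] {A : J → Type*} [∀ j, CommMonoid (A j)]
  [∀ j, TopologicalSpace (A j)]

theorem Pi.hasProd_mulSingle (x : ∀ j, A j) :
    HasProd (fun j ↦ Pi.mulSingle j (x j)) x :=
  Pi.hasProd.mpr fun k ↦ by
    simpa using hasProd_single (f := fun j ↦ (Pi.mulSingle j (x j) : ∀ i, A i) k) k
      fun j hj ↦ Pi.mulSingle_eq_of_ne hj.symm _

namespace ContinuousMonoidHom

theorem hasProd_map_mulSingle {M : Type*} [CommMonoid M] [TopologicalSpace M]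
    (ω : ContinuousMonoidHom (∀ j, A j) M) (x : ∀ j, A j) :
    HasProd (fun j ↦ ω (Pi.mulSingle j (x j))) (ω x) :=
  (Pi.hasProd_mulSingle x).map ω ω.continuous

theorem pi_ext {M : Type*} [CommMonoid M] [TopologicalSpace M] [T2Space M]
    {ω ω' : ContinuousMonoidHom (∀ j, A j) M}
    (h : ∀ j a, ω (Pi.mulSingle j a) = ω' (Pi.mulSingle j a)) : ω = ω' :=
  ext fun x ↦
    (ω.hasProd_map_mulSingle x).unique (by simpa only [h] using ω'.hasProd_map_mulSingle x)

variable {H : Type*} [CommGroup H] [UniformSpace H] [IsUniformGroup H] [NonarchimedeanGroup H]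
  [CompleteSpace H] [T2Space H] (ψ : ∀ j, A j →* H) (hcont : ∀ j, Continuous (ψ j))
  (hψ : TendstoUniformly (fun j (x : ∀ j, A j) ↦ ψ j (x j)) 1 cofinite)

noncomputable def piTprod : ContinuousMonoidHom (∀ j, A j) H where
  toFun x := ∏' j, ψ j (x j)
  map_one' := by simp
  map_mul' x y := by
    simp only [Pi.mul_apply, map_mul]
    exact (NonarchimedeanGroup.multipliable_of_tendstoUniformly_cofinite_one hψ x).tprod_mul
      (NonarchimedeanGroup.multipliable_of_tendstoUniformly_cofinite_one hψ y)
  continuous_toFun := NonarchimedeanGroup.continuous_tprod_of_tendstoUniformly_cofinite_one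
    (fun j ↦ (hcont j).comp (continuous_apply j)) hψ

theorem piTprod_mulSingle (j : J) (a : A j) : piTprod ψ hcont hψ (Pi.mulSingle j a) = ψ j a :=
  tprod_eq_mulSingle j (fun k hk ↦ by simp [Pi.mulSingle_eq_of_ne hk]) |>.trans (by simp)

end ContinuousMonoidHom

end PiProduct

theorem exists_unique_factor_profinite_general {J : Type*} [DecidableEq J] (A : J → Type*)
    [∀ j, CommGroup (A j)] [∀ j, TopologicalSpace (A j)]
    {H : Type*} [CommGroup H] [TopologicalSpace H] [IsTopologicalGroup H]
    [CompactSpace H] [TotallyDisconnectedSpace H]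
    (ψ : ∀ j, A j →* H) (hcont : ∀ j, Continuous (ψ j))
    (hconv : ∀ U ∈ nhds (1 : H), {j : J | ¬ ∀ a : A j, ψ j a ∈ U}.Finite) :
    ∃! ω : ContinuousMonoidHom (∀ j, A j) H,
      ∀ (j : J) (a : A j), ω (Pi.mulSingle j a) = ψ j a := by
  let : UniformSpace H := IsTopologicalGroup.rightUniformSpace H
  have : IsUniformGroup H := isUniformGroup_of_commGroup
  have : NonarchimedeanGroup H := .of_compactSpace_of_totallyDisconnectedSpace
  have : CompleteSpace H := complete_of_compact
  have hψ : TendstoUniformly (fun j (x : ∀ j, A j) ↦ ψ j (x j)) 1 cofinite := by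
    rw [IsTopologicalGroup.tendstoUniformly_iff _ _ _ rfl]
    exact fun U hU ↦ (eventually_cofinite.mpr (hconv U hU)).mono fun j hj x ↦ by
      simpa using hj (x j)
  refine ⟨.piTprod ψ hcont hψ, ContinuousMonoidHom.piTprod_mulSingle ψ hcont hψ, fun ω hω ↦ ?_⟩
  exact ContinuousMonoidHom.pi_ext fun j a ↦ by rw [hω, ContinuousMonoidHom.piTprod_mulSingle]

/-- Universal property of the product as conditional coproduct, for a profinite
abelian target: if `H` is a compact Hausdorff totally disconnected topological
abelian group, every convergent family of continuous homomorphisms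
`ψ_j : A_j → H` factors uniquely through the Cartesian product `∏_j A_j`
via the canonical embeddings. -/
theorem exists_unique_factor_profinite {J : Type*} [DecidableEq J] (A : J → Type*)
    [∀ j, CommGroup (A j)] [∀ j, TopologicalSpace (A j)] [∀ j, IsTopologicalGroup (A j)]
    {H : Type*} [CommGroup H] [TopologicalSpace H] [IsTopologicalGroup H]
    [CompactSpace H] [T2Space H] [TotallyDisconnectedSpace H]
    (ψ : ∀ j, A j →* H) (hcont : ∀ j, Continuous (ψ j))
    (hconv : ∀ U ∈ nhds (1 : H), {j : J | ¬ ∀ a : A j, ψ j a ∈ U}.Finite) :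
    ∃! ω : ContinuousMonoidHom (∀ j, A j) H,
      ∀ (j : J) (a : A j), ω (Pi.mulSingle j a) = ψ j a :=
  exists_unique_factor_profinite_general A ψ hcont hconv
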